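/- arXiv:2410.18452 — 2 statements merged into one kernel-verified Lean document; each statement's English description precedes it below -/
import Mathlib

section
/- Let n ≥ 1, m ≥ 0, q ∈ [1,∞). Let U, K : (0,∞)×ℝⁿ → ℝⁿ be measurable with U(1,·), K(1,·) ∈ L^q(ℝⁿ), each having parabolic scaling of order m (λ^{n+m} U(λ²t, λx) = U(t,x) and λ^{n+m} K(λ²t, λx) = K(t,x) for all λ > 0). If ‖U(t,·) + K(t,·) log t‖_{L^q(ℝⁿ)} = o(t^{−γ_q − m/2} log t) as t → +∞, then K(1,x) = 0 for almost every x ∈ ℝⁿ (and hence K(t,·) = 0 a.e. for every t > 0). -/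
open MeasureTheory Real Filter
open scoped ENNReal Topology

noncomputable section

abbrev Spc (n : ℕ) := EuclideanSpace ℝ (Fin n)

/-- γ_q = (n/2)(1 − 1/q). -/
def gammaExp (n : ℕ) (q : ℝ≥0∞) : ℝ := ((n : ℝ) / 2) * (1 - 1 / q.toReal)

/-!
By parabolic scaling, `V t = t^{-k/2} V 1 (t^{-1/2} ·)`, and a dilation of `ℝⁿ` rescales the
`L^q` norm by an explicit power, so the weight `t^{γ_q + m/2}` exactly cancels the time
dependence: the decay hypothesis becomes `‖U(1,·) + log t · K(1,·)‖_q = o(log t)`. Dividing by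
`log t` and using `U(1,·) ∈ L^q` forces `‖K(1,·)‖_q = 0`; scaling then transports `K(1,·) = 0`
to every time.
-/

open Module

section Dilation

variable {E F : Type*} [NormedAddCommGroup E] [NormedSpace ℝ E] [MeasurableSpace E]
  [BorelSpace E] [FiniteDimensional ℝ E] (μ : Measure E) [μ.IsAddHaarMeasure]
  [NormedAddCommGroup F]

theorem eLpNorm_comp_const_smul (f : E → F) (p : ℝ≥0∞) {c : ℝ} (hc : c ≠ 0) :
    eLpNorm (fun x => f (c • x)) p μ
      = ENNReal.ofReal (|c| ^ (-(finrank ℝ E : ℝ) / p.toReal)) * eLpNorm f p μ := by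
  have hc' : 0 < |c| := abs_pos.2 hc
  rw [show (fun x => f (c • x)) = f ∘ (c • ·) from rfl,
    ← (measurableEmbedding_const_smul₀ hc).eLpNorm_map_measure, Measure.map_addHaar_smul μ hc,
    eLpNorm_smul_measure_of_ne_zero (by simp [hc]), smul_eq_mul, one_div, ENNReal.toReal_inv,
    ENNReal.ofReal_rpow_of_nonneg (by positivity) (by positivity), abs_inv, abs_pow,
    ← Real.rpow_natCast, ← Real.rpow_neg hc'.le, ← Real.rpow_mul hc'.le, neg_div, div_eq_mul_inv,
    neg_mul]

end Dilation

/-- The paper's order `m` in `ℝⁿ` corresponds to the exponent `k = n + m`. -/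
def HasParabolicScaling {E F : Type*} [SMul ℝ E] [SMul ℝ F] (k : ℕ) (V : ℝ → E → F) : Prop :=
  ∀ lam > (0 : ℝ), ∀ t > (0 : ℝ), ∀ x : E, lam ^ k • V (lam ^ 2 * t) (lam • x) = V t x

namespace HasParabolicScaling

section Algebra

variable {E F : Type*} [SMul ℝ E] [AddCommGroup F] [Module ℝ F] {k : ℕ} {U V : ℝ → E → F}

theorem add (hU : HasParabolicScaling k U) (hV : HasParabolicScaling k V) :
    HasParabolicScaling k (fun t x => U t x + V t x) := fun lam hlam t ht x => by
  rw [smul_add, hU lam hlam t ht x, hV lam hlam t ht x]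

theorem const_smul (hV : HasParabolicScaling k V) (c : ℝ) :
    HasParabolicScaling k (fun t x => c • V t x) := fun lam hlam t ht x => by
  rw [smul_comm, hV lam hlam t ht x]

end Algebra

variable {E F : Type*} [NormedAddCommGroup E] [NormedSpace ℝ E] [NormedAddCommGroup F]
  [NormedSpace ℝ F] {k : ℕ} {V : ℝ → E → F}

theorem eq_smul_comp (hV : HasParabolicScaling k V) {t : ℝ} (ht : 0 < t) (x : E) :
    V t x = (√t ^ k)⁻¹ • V 1 ((√t)⁻¹ • x) := by
  have hs : 0 < √t := Real.sqrt_pos.2 ht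
  have h := hV √t hs 1 one_pos ((√t)⁻¹ • x)
  rw [Real.sq_sqrt ht.le, mul_one, smul_inv_smul₀ hs.ne'] at h
  rw [← h, inv_smul_smul₀ (by positivity)]

variable [MeasurableSpace E] [BorelSpace E] [FiniteDimensional ℝ E] (μ : Measure E)
  [μ.IsAddHaarMeasure]

theorem eLpNorm_eq (hV : HasParabolicScaling k V) (p : ℝ≥0∞) {t : ℝ} (ht : 0 < t) :
    eLpNorm (V t) p μ
      = ENNReal.ofReal (t ^ ((finrank ℝ E / p.toReal - k) / 2)) * eLpNorm (V 1) p μ := by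
  have hs : 0 < √t := Real.sqrt_pos.2 ht
  have hVt : V t = (√t ^ k)⁻¹ • fun x => V 1 ((√t)⁻¹ • x) := funext (hV.eq_smul_comp ht)
  rw [hVt, eLpNorm_const_smul, eLpNorm_comp_const_smul μ _ p (inv_ne_zero hs.ne'),
    Real.enorm_eq_ofReal (by positivity), ← mul_assoc, ← ENNReal.ofReal_mul (by positivity),
    abs_inv, abs_of_pos hs, Real.sqrt_eq_rpow, ← Real.rpow_natCast, ← Real.rpow_mul ht.le,
    ← Real.rpow_neg (by positivity), ← Real.rpow_neg ht.le, ← Real.rpow_mul ht.le,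
    ← Real.rpow_add ht]
  congr 3
  ring

theorem ae_eq_zero (hV : HasParabolicScaling k V) (h1 : V 1 =ᵐ[μ] 0) {t : ℝ} (ht : 0 < t) :
    V t =ᵐ[μ] 0 := by
  have hs : 0 < √t := Real.sqrt_pos.2 ht
  have hcomp : (fun x => V 1 ((√t)⁻¹ • x)) =ᵐ[μ] 0 :=
    (Measure.quasiMeasurePreserving_smul μ (inv_ne_zero hs.ne')).ae_eq_comp h1
  filter_upwards [hcomp] with x hx
  rw [hV.eq_smul_comp ht, hx, Pi.zero_apply, smul_zero]

end HasParabolicScaling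

theorem eLpNorm_eq_zero_of_tendsto_inv_mul_eLpNorm_add_smul {α ι E : Type*}
    [MeasurableSpace α] {μ : Measure α} [NormedAddCommGroup E] [NormedSpace ℝ E] {p : ℝ≥0∞}
    {l : Filter ι} [l.NeBot] {c : ι → ℝ} (hc : Tendsto c l atTop) {f g : α → E}
    (hf : MemLp f p μ) (hg : AEStronglyMeasurable g μ)
    (h : Tendsto (fun i => ENNReal.ofReal (c i)⁻¹ * eLpNorm (f + c i • g) p μ) l (𝓝 0)) :
    eLpNorm g p μ = 0 := by
  have hbound : ∀ᶠ i in l, eLpNorm g p μ ≤ ENNReal.LpAddConst p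
      * (ENNReal.ofReal (c i)⁻¹ * eLpNorm (f + c i • g) p μ
        + ENNReal.ofReal (c i)⁻¹ * eLpNorm f p μ) := by
    filter_upwards [hc.eventually_gt_atTop 0] with i hi
    have htri : eLpNorm (c i • g) p μ
        ≤ ENNReal.LpAddConst p * (eLpNorm (f + c i • g) p μ + eLpNorm f p μ) := by
      simpa using eLpNorm_sub_le' (hf.1.add (hg.const_smul (c i))) hf.1 p
    calc eLpNorm g p μ = ENNReal.ofReal (c i)⁻¹ * eLpNorm (c i • g) p μ := by
          rw [eLpNorm_const_smul, Real.enorm_eq_ofReal hi.le, ← mul_assoc,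
            ← ENNReal.ofReal_mul (by positivity), inv_mul_cancel₀ hi.ne', ENNReal.ofReal_one,
            one_mul]
      _ ≤ _ := by
          grw [htri]
          rw [mul_left_comm, mul_add]
  have hc_inv : Tendsto (fun i => ENNReal.ofReal (c i)⁻¹) l (𝓝 0) := by
    simpa using ENNReal.tendsto_ofReal (tendsto_inv_atTop_zero.comp hc)
  have hlim : Tendsto (fun i => ENNReal.LpAddConst p
      * (ENNReal.ofReal (c i)⁻¹ * eLpNorm (f + c i • g) p μ
        + ENNReal.ofReal (c i)⁻¹ * eLpNorm f p μ)) l (𝓝 0) := by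
    simpa using ENNReal.Tendsto.const_mul
      (h.add (ENNReal.Tendsto.mul_const hc_inv (Or.inr hf.2.ne)))
      (Or.inr (ENNReal.LpAddConst_lt_top p).ne)
  exact le_antisymm (ge_of_tendsto hlim hbound) zero_le

theorem log_profile_vanishes_general (n : ℕ) (m : ℕ)
    (q : ℝ≥0∞) (hq : 1 ≤ q)
    (U K : ℝ → Spc n → Spc n)
    (hU1 : MemLp (U 1) q volume) (hK1 : MemLp (K 1) q volume)
    (hUscale : ∀ lam > (0:ℝ), ∀ t > (0:ℝ), ∀ x : Spc n,
      lam ^ (n + m) • U (lam ^ 2 * t) (lam • x) = U t x)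
    (hKscale : ∀ lam > (0:ℝ), ∀ t > (0:ℝ), ∀ x : Spc n,
      lam ^ (n + m) • K (lam ^ 2 * t) (lam • x) = K t x)
    (hdecay : Tendsto
      (fun t : ℝ => ENNReal.ofReal (t ^ (gammaExp n q + (m : ℝ) / 2) / Real.log t)
        * eLpNorm (fun x => U t x + Real.log t • K t x) q volume)
      atTop (𝓝 0)) :
    (∀ᵐ x : Spc n ∂volume, K 1 x = 0) ∧ ∀ t > (0:ℝ), ∀ᵐ x : Spc n ∂volume, K t x = 0 := by
  have hK : HasParabolicScaling (n + m) K := hKscale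
  have hW (c : ℝ) : HasParabolicScaling (n + m) (fun t x => U t x + c • K t x) :=
    HasParabolicScaling.add hUscale (hK.const_smul c)
  have hprofile : Tendsto (fun t => ENNReal.ofReal (Real.log t)⁻¹
      * eLpNorm (fun x => U 1 x + Real.log t • K 1 x) q volume) atTop (𝓝 0) := by
    refine hdecay.congr' ?_
    filter_upwards [eventually_gt_atTop 1] with t ht1
    have ht : 0 < t := zero_lt_one.trans ht1
    have hexp : gammaExp n q + (m : ℝ) / 2
        + ((finrank ℝ (Spc n) : ℝ) / q.toReal - (n + m : ℕ)) / 2 = 0 := by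
      rw [finrank_euclideanSpace_fin, gammaExp]
      push_cast
      ring
    rw [(hW (Real.log t)).eLpNorm_eq volume q ht, ← mul_assoc,
      ← ENNReal.ofReal_mul (div_nonneg (by positivity) (Real.log_pos ht1).le),
      div_mul_eq_mul_div, ← Real.rpow_add ht, hexp, Real.rpow_zero, one_div]
  have hK1_zero : K 1 =ᵐ[volume] 0 :=
    (eLpNorm_eq_zero_iff hK1.1 (zero_lt_one.trans_le hq).ne').1
      (eLpNorm_eq_zero_of_tendsto_inv_mul_eLpNorm_add_smul Real.tendsto_log_atTop hU1 hK1.1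
        hprofile)
  exact ⟨hK1_zero, fun t ht => hK.ae_eq_zero volume hK1_zero ht⟩

/-- if `U, K` both have parabolic scaling of order `m`, `U(1,·), K(1,·) ∈ L^q`
(`1 ≤ q < ∞`) and `‖U(t,·) + K(t,·) log t‖_{L^q} = o(t^{−γ_q−m/2} log t)` as `t → ∞`,
then `K(1,·) = 0` a.e., and hence `K(t,·) = 0` a.e. for every `t > 0`. -/
theorem log_profile_vanishes (n : ℕ) (hn : 1 ≤ n) (m : ℕ)
    (q : ℝ≥0∞) (hq : 1 ≤ q) (hq' : q ≠ ∞)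
    (U K : ℝ → Spc n → Spc n)
    (hUmeas : Measurable (Function.uncurry U))
    (hKmeas : Measurable (Function.uncurry K))
    (hU1 : MemLp (U 1) q volume) (hK1 : MemLp (K 1) q volume)
    (hUscale : ∀ lam > (0:ℝ), ∀ t > (0:ℝ), ∀ x : Spc n,
      lam ^ (n + m) • U (lam ^ 2 * t) (lam • x) = U t x)
    (hKscale : ∀ lam > (0:ℝ), ∀ t > (0:ℝ), ∀ x : Spc n,
      lam ^ (n + m) • K (lam ^ 2 * t) (lam • x) = K t x)
    (hdecay : Tendsto
      (fun t : ℝ => ENNReal.ofReal (t ^ (gammaExp n q + (m : ℝ) / 2) / Real.log t)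
        * eLpNorm (fun x => U t x + Real.log t • K t x) q volume)
      atTop (𝓝 0)) :
    (∀ᵐ x : Spc n ∂volume, K 1 x = 0) ∧ ∀ t > (0:ℝ), ∀ᵐ x : Spc n ∂volume, K t x = 0 :=
  log_profile_vanishes_general n m q hq U K hU1 hK1 hUscale hKscale hdecay
end
end

section
/- Let n ≥ 2 and let u : ℝⁿ → ℝⁿ be a Schwartz vector field with Σ_{h=1}^n ∂_h u^h = 0. Define ω^{ij} = ∂_i u^j − ∂_j u^i. Then for every 1 ≤ j ≤ n and every x ∈ ℝⁿ, u^j(x) = −(2π)^{-n/2} ∫_{ℝⁿ} |ξ|^{-2} ( Σ_{i=1}^n i ξ_i 𝓕[ω^{ij}](ξ) ) e^{i x·ξ} dξ, where the integral converges absolutely (this is the Biot–Savart law u^j = −∇(−Δ)^{-1}·ω^{⋆j}). -/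
open MeasureTheory Real Filter Complex
open scoped ENNReal Topology

noncomputable section

/-- spatial partial derivative `∂_j`. -/
def pd {n : ℕ} {F : Type*} [NormedAddCommGroup F] [NormedSpace ℝ F]
    (j : Fin n) (f : Spc n → F) (x : Spc n) : F :=
  fderiv ℝ f x (EuclideanSpace.single j 1)

/-- `x · ξ`. -/
def dotp {n : ℕ} (x ξ : Spc n) : ℝ := ∑ h, x h * ξ h

/-! On the Fourier side `𝓕ω^{ij}(ξ) = i (ξ_i 𝓕u^j(ξ) − ξ_j 𝓕u^i(ξ))`, and the divergence
condition reads `ξ · 𝓕u(ξ) = 0`, so `Σ_i i ξ_i 𝓕ω^{ij}(ξ) = −|ξ|² 𝓕u^j(ξ)`. Dividing by `|ξ|²`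
(off the null set `ξ = 0`) and applying Fourier inversion returns `u^j`: the two factors
`(2π)^{-n/2}` cancel the `(2π)^n` of the inversion formula with kernel `e^{i x·ξ}`. -/

open FourierTransform LineDeriv SchwartzMap
open scoped RealInnerProductSpace

theorem SchwartzMap.lineDerivOp_postcompCLM {E F G : Type*} [NormedAddCommGroup E]
    [NormedSpace ℝ E] [NormedAddCommGroup F] [NormedSpace ℝ F] [NormedAddCommGroup G]
    [NormedSpace ℝ G] (L : F →L[ℝ] G) (f : 𝓢(E, F)) (m : E) :
    ∂_{m} (postcompCLM L f) = postcompCLM L (∂_{m} f) := by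
  ext x
  exact congrArg (· m) (L.hasFDerivAt.comp x (f.hasFDerivAt x)).fderiv

theorem sum_mul_mul_sub_mul_eq_of_sum_mul_eq_zero {R ι : Type*} [CommRing R] [Fintype ι]
    (ξ a : ι → R) (ha : ∑ i, ξ i * a i = 0) (j : ι) :
    ∑ i, ξ i * (ξ i * a j - ξ j * a i) = (∑ i, ξ i ^ 2) * a j := by
  have h : ∑ i, ξ i * (ξ i * a j - ξ j * a i) = (∑ i, ξ i ^ 2) * a j - ξ j * ∑ i, ξ i * a i := by
    rw [Finset.sum_mul, Finset.mul_sum, ← Finset.sum_sub_distrib]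
    exact Finset.sum_congr rfl fun i _ => by ring
  rw [h, ha, mul_zero, sub_zero]

section FourierAngular

variable {V : Type*} [NormedAddCommGroup V] [InnerProductSpace ℝ V] [FiniteDimensional ℝ V]
  [MeasurableSpace V] [BorelSpace V]

/-- The Fourier transform with kernel `e^{-i y·ξ}` and no normalising constant; Mathlib's `𝓕`
uses the kernel `e^{-2πi y·ξ}`. -/
def fourierAngular (f : V → ℂ) (ξ : V) : ℂ :=
  ∫ y, f y * cexp (-(I * ⟪y, ξ⟫))

theorem fourierAngular_eq_fourier (f : V → ℂ) (ξ : V) :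
    fourierAngular f ξ = 𝓕 f ((2 * π)⁻¹ • ξ) := by
  rw [fourierAngular, Real.fourier_eq]
  congr 1 with y
  rw [Circle.smul_def, Real.fourierChar_apply, real_inner_smul_right, smul_eq_mul, mul_comm]
  congr 2
  push_cast
  field_simp

namespace SchwartzMap

theorem fourierAngular_sub (f g : 𝓢(V, ℂ)) (ξ : V) :
    fourierAngular ⇑(f - g) ξ = fourierAngular f ξ - fourierAngular g ξ := by
  simp only [fourierAngular_eq_fourier, ← fourier_coe, sub_eq_add_neg,
    FourierTransform.fourier_add, FourierTransform.fourier_neg, add_apply, neg_apply]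

theorem fourierAngular_sum {ι : Type*} (s : Finset ι) (f : ι → 𝓢(V, ℂ)) (ξ : V) :
    fourierAngular ⇑(∑ i ∈ s, f i) ξ = ∑ i ∈ s, fourierAngular (f i) ξ := by
  simp only [fourierAngular_eq_fourier, ← fourier_coe, FourierTransform.fourier_sum, sum_apply]

theorem fourierAngular_lineDerivOp (f : 𝓢(V, ℂ)) (m ξ : V) :
    fourierAngular ⇑(∂_{m} f : 𝓢(V, ℂ)) ξ = I * ⟪ξ, m⟫ * fourierAngular f ξ := by
  have : (inner ℝ · m).HasTemperateGrowth := ((innerSL ℝ).flip m).hasTemperateGrowth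
  rw [fourierAngular_eq_fourier, fourierAngular_eq_fourier, ← fourier_coe, ← fourier_coe,
    fourier_lineDerivOp_eq, smul_apply, smulLeftCLM_apply_apply this, real_inner_smul_left]
  simp only [smul_eq_mul, Complex.real_smul]
  push_cast
  field_simp

theorem sum_inner_mul_fourierAngular_eq_zero {ι : Type*} [Fintype ι]
    (f : ι → 𝓢(V, ℂ)) (m : ι → V) (hf : ∑ i, ∂_{m i} (f i) = 0) (ξ : V) :
    ∑ i, ⟪ξ, m i⟫ * fourierAngular (f i) ξ = 0 := by
  have h : I * ∑ i, ⟪ξ, m i⟫ * fourierAngular (f i) ξ = 0 := by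
    simp_rw [Finset.mul_sum, ← mul_assoc, ← fourierAngular_lineDerivOp, ← fourierAngular_sum, hf]
    simp [fourierAngular]
  exact (mul_eq_zero.1 h).resolve_left I_ne_zero

theorem integrable_fourierAngular_mul_cexp (f : 𝓢(V, ℂ)) (x : V) :
    Integrable (fun ξ => fourierAngular f ξ * cexp (I * ⟪x, ξ⟫)) := by
  simp only [fourierAngular_eq_fourier, ← fourier_coe]
  refine ((𝓕 f).integrable.comp_smul (by positivity)).mul_bdd (c := 1) (by fun_prop)
    (ae_of_all _ fun ξ => ?_)
  rw [mul_comm, Complex.norm_exp_ofReal_mul_I]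

theorem integral_fourierAngular_mul_cexp (f : 𝓢(V, ℂ)) (x : V) :
    ∫ ξ, fourierAngular f ξ * cexp (I * ⟪x, ξ⟫) = (2 * π) ^ Module.finrank ℝ V * f x := by
  have hrescale : (fun ξ => fourierAngular f ξ * cexp (I * ⟪x, ξ⟫))
      = fun ξ => (fun v => 𝐞 ⟪v, x⟫ • 𝓕 f v) ((2 * π)⁻¹ • ξ) := by
    ext ξ
    dsimp only
    rw [fourierAngular_eq_fourier, ← fourier_coe, Circle.smul_def, Real.fourierChar_apply,
      real_inner_smul_left, real_inner_comm, smul_eq_mul, mul_comm]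
    push_cast
    field_simp
  have hinv : ∫ v, 𝐞 ⟪v, x⟫ • 𝓕 f v = f x := by
    rw [← Real.fourierInv_eq, ← fourierInv_coe, FourierTransform.fourierInv_fourier_eq]
  rw [hrescale, Measure.integral_comp_smul volume (fun v => 𝐞 ⟪v, x⟫ • 𝓕 f v), hinv, inv_pow,
    inv_inv, abs_of_pos (by positivity), Complex.real_smul]
  push_cast
  rfl

/-- `(‖ξ‖²)⁻¹ * ‖ξ‖² = 1` fails only at `ξ = 0` (where `0⁻¹ = 0`), a null set when `V ≠ 0`. -/
theorem integrable_and_integral_inv_norm_sq_mul_cexp [Nontrivial V] (f : 𝓢(V, ℂ)) {S : V → ℂ}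
    {a : ℂ} (hS : ∀ ξ, S ξ = a * (‖ξ‖ ^ 2 : ℝ) * fourierAngular f ξ) (x : V) :
    Integrable (fun ξ => ((‖ξ‖ ^ 2 : ℝ) : ℂ)⁻¹ * S ξ * cexp (I * ⟪x, ξ⟫)) ∧
      ∫ ξ, ((‖ξ‖ ^ 2 : ℝ) : ℂ)⁻¹ * S ξ * cexp (I * ⟪x, ξ⟫)
        = a * (2 * π) ^ Module.finrank ℝ V * f x := by
  have hae : (fun ξ => ((‖ξ‖ ^ 2 : ℝ) : ℂ)⁻¹ * S ξ * cexp (I * ⟪x, ξ⟫))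
      =ᵐ[volume] fun ξ => a * (fourierAngular f ξ * cexp (I * ⟪x, ξ⟫)) := by
    filter_upwards [Measure.ae_ne volume 0] with ξ hξ
    have : ((‖ξ‖ ^ 2 : ℝ) : ℂ) ≠ 0 := by exact_mod_cast pow_ne_zero 2 (norm_ne_zero_iff.2 hξ)
    rw [hS]
    field_simp
  refine ⟨((integrable_fourierAngular_mul_cexp f x).const_mul a).congr hae.symm, ?_⟩
  rw [integral_congr_ae hae, integral_const_mul, integral_fourierAngular_mul_cexp, mul_assoc]

end SchwartzMap

end FourierAngular

theorem dotp_eq_inner {n : ℕ} (x ξ : Spc n) : dotp x ξ = ⟪x, ξ⟫ := by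
  simp [dotp, PiLp.inner_apply, mul_comm]

namespace SchwartzMap

variable {n : ℕ}

theorem pd_coe {F : Type*} [NormedAddCommGroup F] [NormedSpace ℝ F] (i : Fin n)
    (f : 𝓢(Spc n, F)) : pd i ⇑f = ⇑(∂_{EuclideanSpace.single i (1 : ℝ)} f : 𝓢(Spc n, F)) :=
  rfl

theorem fourierAngular_vorticity (u : Fin n → 𝓢(Spc n, ℝ)) (i j : Fin n) (ξ : Spc n) :
    fourierAngular (fun y => ((pd i (u j) y - pd j (u i) y : ℝ) : ℂ)) ξ
      = I * (ξ i * fourierAngular (postcompCLM ofRealCLM (u j)) ξ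
          - ξ j * fourierAngular (postcompCLM ofRealCLM (u i)) ξ) := by
  set U : Fin n → 𝓢(Spc n, ℂ) := fun k => postcompCLM ofRealCLM (u k)
  set e : Fin n → Spc n := fun i => EuclideanSpace.single i 1
  have hω : (fun y => ((pd i (u j) y - pd j (u i) y : ℝ) : ℂ))
      = ⇑(∂_{e i} (U j) - ∂_{e j} (U i)) := by
    ext y
    simp [U, e, pd_coe, lineDerivOp_postcompCLM]
  rw [hω, fourierAngular_sub, fourierAngular_lineDerivOp, fourierAngular_lineDerivOp]
  simp only [e, EuclideanSpace.inner_single_right, one_mul, conj_trivial]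
  ring

theorem sum_mul_fourierAngular_eq_zero_of_div_eq_zero (u : Fin n → 𝓢(Spc n, ℝ))
    (hdiv : ∀ x, ∑ h, pd h (u h) x = 0) (ξ : Spc n) :
    ∑ i, (ξ i : ℂ) * fourierAngular (postcompCLM ofRealCLM (u i)) ξ = 0 := by
  have hdiv' : ∑ i, ∂_{EuclideanSpace.single i (1 : ℝ)} (postcompCLM ofRealCLM (u i)) = 0 := by
    ext y
    simpa [sum_apply, lineDerivOp_postcompCLM, ← pd_coe] using congrArg ofReal (hdiv y)
  simpa [EuclideanSpace.inner_single_right] using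
    sum_inner_mul_fourierAngular_eq_zero _ _ hdiv' ξ

theorem sum_I_mul_fourierAngular_vorticity (u : Fin n → 𝓢(Spc n, ℝ))
    (hdiv : ∀ x, ∑ h, pd h (u h) x = 0) (j : Fin n) (ξ : Spc n) :
    ∑ i, I * ξ i * fourierAngular (fun y => ((pd i (u j) y - pd j (u i) y : ℝ) : ℂ)) ξ
      = -(‖ξ‖ ^ 2 : ℝ) * fourierAngular (postcompCLM ofRealCLM (u j)) ξ := by
  set F : Fin n → ℂ := fun k => fourierAngular (postcompCLM ofRealCLM (u k)) ξ
  calc ∑ i, I * ξ i * fourierAngular (fun y => ((pd i (u j) y - pd j (u i) y : ℝ) : ℂ)) ξ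
      = -∑ i, (ξ i : ℂ) * (ξ i * F j - ξ j * F i) := by
        rw [← Finset.sum_neg_distrib]
        refine Finset.sum_congr rfl fun i _ => ?_
        rw [fourierAngular_vorticity]
        linear_combination (ξ i * (ξ i * F j - ξ j * F i) : ℂ) * I_sq
    _ = -(‖ξ‖ ^ 2 : ℝ) * F j := by
        rw [sum_mul_mul_sub_mul_eq_of_sum_mul_eq_zero _ F
          (sum_mul_fourierAngular_eq_zero_of_div_eq_zero u hdiv ξ), EuclideanSpace.norm_sq_eq]
        simp only [Real.norm_eq_abs, sq_abs]
        push_cast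
        ring

end SchwartzMap

theorem biot_savart_general (n : ℕ)
    (u : Fin n → SchwartzMap (Spc n) ℝ)
    (hdiv : ∀ x : Spc n, ∑ h, pd h (fun y => u h y) x = 0)
    (omg : Fin n → Fin n → Spc n → ℝ)
    (homg : ∀ i j x, omg i j x = pd i (fun y => u j y) x - pd j (fun y => u i y) x)
    (Fomg : Fin n → Fin n → Spc n → ℂ)
    (hFomg : ∀ i j ξ, Fomg i j ξ
      = (((2 * π) ^ (-(n : ℝ) / 2) : ℝ) : ℂ)
          * ∫ y : Spc n, (omg i j y : ℂ) * Complex.exp (-(Complex.I * (dotp y ξ : ℂ)))) :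
    ∀ j : Fin n, ∀ x : Spc n,
      Integrable (fun ξ : Spc n =>
        ((‖ξ‖ ^ 2 : ℝ) : ℂ)⁻¹ * (∑ i, Complex.I * (ξ i : ℂ) * Fomg i j ξ)
          * Complex.exp (Complex.I * (dotp x ξ : ℂ))) volume
      ∧ (u j x : ℂ)
          = -(((2 * π) ^ (-(n : ℝ) / 2) : ℝ) : ℂ)
              * ∫ ξ : Spc n,
                  ((‖ξ‖ ^ 2 : ℝ) : ℂ)⁻¹ * (∑ i, Complex.I * (ξ i : ℂ) * Fomg i j ξ)
                    * Complex.exp (Complex.I * (dotp x ξ : ℂ)) := by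
  intro j x
  have : Nonempty (Fin n) := ⟨j⟩
  set c : ℝ := (2 * π) ^ (-(n : ℝ) / 2)
  have hsymbol (ξ : Spc n) : ∑ i, I * ξ i * Fomg i j ξ
      = -c * (‖ξ‖ ^ 2 : ℝ) * fourierAngular (postcompCLM ofRealCLM (u j)) ξ := by
    have hFomg' (i : Fin n) :
        Fomg i j ξ = c * fourierAngular (fun y => ((pd i (u j) y - pd j (u i) y : ℝ) : ℂ)) ξ := by
      simp_rw [hFomg, homg, dotp_eq_inner]
      rfl
    simp_rw [hFomg', mul_left_comm _ (c : ℂ), ← Finset.mul_sum,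
      sum_I_mul_fourierAngular_vorticity u hdiv]
    ring
  have hc : (c : ℂ) * c * (2 * π) ^ n = 1 := by
    norm_cast
    rw [← Real.rpow_add (by positivity), ← Real.rpow_natCast, ← Real.rpow_add (by positivity)]
    ring_nf
    exact Real.rpow_zero _
  obtain ⟨hint, hval⟩ := integrable_and_integral_inv_norm_sq_mul_cexp _ hsymbol x
  simp_rw [dotp_eq_inner]
  refine ⟨hint, ?_⟩
  rw [hval, finrank_euclideanSpace_fin, postcompCLM_apply, ofRealCLM_apply]
  linear_combination (-(u j x : ℂ)) * hc

/-- Biot–Savart law. For a divergence-free Schwartz vector field `u` on ℝⁿ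
(n ≥ 2) with vorticity tensor `ω^{ij} = ∂_i u^j − ∂_j u^i`, one has, for every `j` and `x`,
`u^j(x) = −(2π)^{-n/2} ∫ |ξ|^{-2} (Σ_i i ξ_i 𝓕[ω^{ij}](ξ)) e^{i x·ξ} dξ`, the integral
being absolutely convergent. -/
theorem biot_savart (n : ℕ) (hn : 2 ≤ n)
    (u : Fin n → SchwartzMap (Spc n) ℝ)
    (hdiv : ∀ x : Spc n, ∑ h, pd h (fun y => u h y) x = 0)
    (omg : Fin n → Fin n → Spc n → ℝ)
    (homg : ∀ i j x, omg i j x = pd i (fun y => u j y) x - pd j (fun y => u i y) x)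
    (Fomg : Fin n → Fin n → Spc n → ℂ)
    (hFomg : ∀ i j ξ, Fomg i j ξ
      = (((2 * π) ^ (-(n : ℝ) / 2) : ℝ) : ℂ)
          * ∫ y : Spc n, (omg i j y : ℂ) * Complex.exp (-(Complex.I * (dotp y ξ : ℂ)))) :
    ∀ j : Fin n, ∀ x : Spc n,
      Integrable (fun ξ : Spc n =>
        ((‖ξ‖ ^ 2 : ℝ) : ℂ)⁻¹ * (∑ i, Complex.I * (ξ i : ℂ) * Fomg i j ξ)
          * Complex.exp (Complex.I * (dotp x ξ : ℂ))) volume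
      ∧ (u j x : ℂ)
          = -(((2 * π) ^ (-(n : ℝ) / 2) : ℝ) : ℂ)
              * ∫ ξ : Spc n,
                  ((‖ξ‖ ^ 2 : ℝ) : ℂ)⁻¹ * (∑ i, Complex.I * (ξ i : ℂ) * Fomg i j ξ)
                    * Complex.exp (Complex.I * (dotp x ξ : ℂ)) :=
  biot_savart_general n u hdiv omg homg Fomg hFomg
end
end
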